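/- arXiv:2408.10847 — 3 statements merged into one kernel-verified Lean document; each statement's English description precedes it below -/
import Mathlib

section
/- For positive integers $c, d$ with $d \ge 1$, the graph $K_c \vee ((d+1) K_1)$ satisfies $I'(K_c \vee ((d+1) K_1)) = \frac{c}{d}$. -/
open SimpleGraph

noncomputable def isoCount {V : Type*} (G : SimpleGraph V) (S : Set V) : ℕ :=
  {v | v ∉ S ∧ ∀ w, G.Adj v w → w ∈ S}.ncard

noncomputable def isoTough {V : Type*} [Fintype V] (G : SimpleGraph V) : ℝ :=
  sInf {x : ℝ | ∃ S : Set V, 2 ≤ isoCount G S ∧ x = (S.ncard : ℝ) / (isoCount G S : ℝ)}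

noncomputable def isoToughVar {V : Type*} [Fintype V] (G : SimpleGraph V) : ℝ :=
  sInf {x : ℝ | ∃ S : Set V, 2 ≤ isoCount G S ∧ x = (S.ncard : ℝ) / ((isoCount G S : ℝ) - 1)}

/-- The join `K_c ∨ (d K_1)`. -/
def joinKE (c d : ℕ) : SimpleGraph (Fin c ⊕ Fin d) where
  Adj x y := x ≠ y ∧ (x.isLeft ∨ y.isLeft)
  symm := by constructor; intro x y h; tauto
  loopless := by constructor; intro x h; exact h.1 rfl

/-- The star `K_{1,n-1}`: join of one center with `n-1` leaves. -/
def starGraph (n : ℕ) : SimpleGraph (Fin 1 ⊕ Fin (n-1)) := joinKE 1 (n-1)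

/-- The graph `G_l = K_{l-1} ∨ (l K_k)`. -/
def Gl (k l : ℕ) : SimpleGraph (Fin (l-1) ⊕ Fin l × Fin k) where
  Adj x y := x ≠ y ∧ (x.isLeft ∨ y.isLeft ∨
    ∃ i p q, x = Sum.inr (i, p) ∧ y = Sum.inr (i, q))
  symm := by
    constructor
    rintro x y ⟨h1, h2⟩
    refine ⟨h1.symm, ?_⟩
    rcases h2 with h | h | ⟨i, p, q, hx, hy⟩
    · tauto
    · tauto
    · exact Or.inr (Or.inr ⟨i, q, p, hy, hx⟩)
  loopless := ⟨fun x h => h.1 rfl⟩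

noncomputable instance GlDec (k l : ℕ) : DecidableRel (Gl k l).Adj := Classical.decRel _

/-!
Every vertex of `K_c` is universal, so a set `S` leaving at least two isolated vertices must contain
all of `K_c`; then `G - S` is edgeless, its isolated vertices are exactly the complement of `S`, and
`|S| + i(G - S) = c + d + 1` with `|S| ≥ c`. The ratio `|S| / (i(G - S) - 1) = |S| / (c + d - |S|)`
increases with `|S|`, so it is smallest, equal to `c / d`, for `S = K_c`.
-/

namespace SimpleGraph

variable {V : Type*} {G : SimpleGraph V} {S : Set V}

theorem mem_of_two_le_isoCount {u : V} (hu : ∀ v, v ≠ u → G.Adj u v)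
    (h : 2 ≤ isoCount G S) : u ∈ S := by
  obtain ⟨v, ⟨-, hv⟩, hvu⟩ :=
    Set.exists_ne_of_one_lt_ncard (s := {v | v ∉ S ∧ ∀ w, G.Adj v w → w ∈ S}) h u
  exact hv u (hu v hvu).symm

theorem isoCount_eq_ncard_compl (h : ∀ v w, v ∉ S → w ∉ S → ¬ G.Adj v w) :
    isoCount G S = Sᶜ.ncard := by
  unfold isoCount
  congr 1
  ext v
  exact ⟨And.left, fun hv => ⟨hv, fun w hvw => by_contra fun hw => h v w hv hw hvw⟩⟩

end SimpleGraph

section JoinKE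

variable {c n : ℕ} {S : Set (Fin c ⊕ Fin n)}

theorem joinKE_inl_adj (i : Fin c) (v : Fin c ⊕ Fin n) (hv : v ≠ .inl i) :
    (joinKE c n).Adj (.inl i) v :=
  ⟨hv.symm, .inl rfl⟩

theorem range_inl_subset_of_two_le_isoCount (h : 2 ≤ isoCount (joinKE c n) S) :
    Set.range Sum.inl ⊆ S := by
  rintro _ ⟨i, rfl⟩
  exact mem_of_two_le_isoCount (joinKE_inl_adj i) h

theorem joinKE_isoCount_eq_ncard_compl (hS : Set.range Sum.inl ⊆ S) :
    isoCount (joinKE c n) S = Sᶜ.ncard := by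
  refine isoCount_eq_ncard_compl fun v w hv hw ⟨_, hvw⟩ => ?_
  rcases hvw with hv' | hw'
  · obtain ⟨i, rfl⟩ := Sum.isLeft_iff.mp hv'
    exact hv (hS ⟨i, rfl⟩)
  · obtain ⟨i, rfl⟩ := Sum.isLeft_iff.mp hw'
    exact hw (hS ⟨i, rfl⟩)

theorem ncard_range_inl : (Set.range (Sum.inl : Fin c → Fin c ⊕ Fin n)).ncard = c := by
  simp [Set.ncard_range_of_injective Sum.inl_injective]

theorem ncard_add_isoCount_joinKE (hS : Set.range Sum.inl ⊆ S) :
    S.ncard + isoCount (joinKE c n) S = c + n := by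
  rw [joinKE_isoCount_eq_ncard_compl hS, Set.ncard_add_ncard_compl]
  simp

end JoinKE

theorem div_le_div_sub_one_of_add_eq {c d s i : ℕ} (hcs : c ≤ s) (hsum : s + i = c + (d + 1))
    (hi : 2 ≤ i) : (c : ℝ) / d ≤ s / ((i : ℝ) - 1) := by
  have hd : (1 : ℝ) ≤ d := by exact_mod_cast (by omega : 1 ≤ d)
  have hsum' : (s : ℝ) + i = c + (d + 1) := by exact_mod_cast hsum
  have hcs' : (c : ℝ) ≤ s := by exact_mod_cast hcs
  have hi' : (2 : ℝ) ≤ i := by exact_mod_cast hi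
  rw [div_le_div_iff₀ (by linarith) (by linarith)]
  -- with `i - 1 = c + d - s`, the cross-multiplied inequality is `0 ≤ (s - c) (c + d)`
  nlinarith

theorem joinKE_isoToughVar_general (c d : ℕ) (hd : 1 ≤ d) :
    isoToughVar (joinKE c (d + 1)) = (c : ℝ) / (d : ℝ) := by
  have hinl : isoCount (joinKE c (d + 1)) (Set.range Sum.inl) = d + 1 := by
    have := ncard_add_isoCount_joinKE (c := c) (n := d + 1) subset_rfl
    rw [ncard_range_inl] at this
    omega
  refine IsLeast.csInf_eq ⟨⟨Set.range Sum.inl, by omega, ?_⟩, ?_⟩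
  · rw [hinl, ncard_range_inl]
    push_cast
    ring
  · rintro _ ⟨S, hS, rfl⟩
    have hsub := range_inl_subset_of_two_le_isoCount hS
    have hcS : c ≤ S.ncard := by
      simpa only [ncard_range_inl] using Set.ncard_le_ncard hsub
    exact div_le_div_sub_one_of_add_eq hcS (ncard_add_isoCount_joinKE hsub) hS

theorem joinKE_isoToughVar (c d : ℕ) (hc : 1 ≤ c) (hd : 1 ≤ d) :
    isoToughVar (joinKE c (d + 1)) = (c : ℝ) / (d : ℝ) :=
  joinKE_isoToughVar_general c d hd
end

section
/- Let $G$ be a non-complete graph, let $S^{\dagger}$ be a minimizer of $|S|/i(G-S)$ and $S^{\ddagger}$ a minimizer of $|S|/(i(G-S)-1)$ over all $S \subseteq V(G)$ with $i(G-S) \ge 2$, and suppose all such quotients are positive (i.e. the minimizers are nonempty). If $|S^{\dagger}| \ne |S^{\ddagger}|$, then $|S^{\ddagger}| > |S^{\dagger}|$ and $i(G - S^{\ddagger}) > i(G - S^{\dagger})$. -/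
open SimpleGraph

theorem minimizer_comparison {V : Type*} [Fintype V] (G : SimpleGraph V) (hG : G ≠ ⊤)
    (Sd Sz : Set V)
    (h2d : 2 ≤ isoCount G Sd) (hmind : isoTough G = (Sd.ncard : ℝ) / (isoCount G Sd : ℝ))
    (h2z : 2 ≤ isoCount G Sz)
    (hminz : isoToughVar G = (Sz.ncard : ℝ) / ((isoCount G Sz : ℝ) - 1))
    (hposd : Sd.Nonempty) (hposz : Sz.Nonempty)
    (hne : Sd.ncard ≠ Sz.ncard) :
    Sd.ncard < Sz.ncard ∧ isoCount G Sd < isoCount G Sz := by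
  have h1 : isoTough G ≤ (Sz.ncard : ℝ) / (isoCount G Sz : ℝ) := by
    apply csInf_le
    · refine ⟨0, ?_⟩
      rintro x ⟨S, hS, rfl⟩
      positivity
    · exact ⟨Sz, h2z, rfl⟩
  have h2 : isoToughVar G ≤ (Sd.ncard : ℝ) / ((isoCount G Sd : ℝ) - 1) := by
    apply csInf_le
    · refine ⟨0, ?_⟩
      rintro x ⟨S, hS, rfl⟩
      have h1' : (1:ℝ) ≤ (isoCount G S : ℝ) := by exact_mod_cast Nat.one_le_of_lt hS
      have : (0:ℝ) ≤ (isoCount G S : ℝ) - 1 := by linarith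
      exact div_nonneg (by positivity) this
    · exact ⟨Sd, h2d, rfl⟩
  rw [hmind] at h1
  rw [hminz] at h2
  set A := (Sd.ncard : ℝ) with hA
  set B := (isoCount G Sd : ℝ) with hB
  set C := (Sz.ncard : ℝ) with hC
  set D := (isoCount G Sz : ℝ) with hD
  have hApos : 0 < A := by
    rw [hA]; exact_mod_cast Set.ncard_pos (Set.toFinite Sd) |>.mpr hposd
  have hCpos : 0 < C := by
    rw [hC]; exact_mod_cast Set.ncard_pos (Set.toFinite Sz) |>.mpr hposz
  have hB2 : (2:ℝ) ≤ B := by rw [hB]; exact_mod_cast h2d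
  have hD2 : (2:ℝ) ≤ D := by rw [hD]; exact_mod_cast h2z
  have hBpos : 0 < B := by linarith
  have hDpos : 0 < D := by linarith
  have e1 : A * D ≤ C * B := by
    rw [div_le_div_iff₀ hBpos hDpos] at h1; linarith
  have e2 : C * (B - 1) ≤ A * (D - 1) := by
    rw [div_le_div_iff₀ (by linarith : (0:ℝ) < D - 1) (by linarith : (0:ℝ) < B - 1)] at h2
    linarith
  have hAC : A ≤ C := by nlinarith
  have hAC' : A < C := lt_of_le_of_ne hAC (by rw [hA, hC]; exact_mod_cast hne)
  have hBD : B < D := by nlinarith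
  rw [hA, hC] at hAC'
  rw [hB, hD] at hBD
  exact ⟨by exact_mod_cast hAC', by exact_mod_cast hBD⟩
end

section
/- Let $t \ge 0$ and $k \ge 2$ be integers and let $H = K_{t+1} \vee ((t+2) K_k)$. Then $\delta(H) = k + t$ and $I'(H) = k + \frac{k-1}{t+1}$. -/
/-!
The isolated vertices of `H - S` are pairwise non-adjacent, so once there are `m ≥ 2` of them
none lies in the universal part `K_{t+1}` and no two lie in the same copy of `K_k`; hence
`m ≤ t + 2`. Their closed neighbourhoods cover `K_{t+1}` and `m` whole copies of `K_k` and lie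
inside `S` together with the isolated vertices, so `|S| + m ≥ (t + 1) + m k`. Then
`(t + 1)(t + 1 + m (k - 1)) - ((t + 2) k - 1)(m - 1) = (t + 2 - m)(t + k) ≥ 0` bounds
`|S| / (m - 1)` below by `k + (k - 1) / (t + 1)`, with equality when `S` is everything except one
vertex from each copy of `K_k`.
-/

open SimpleGraph

def isoSet {V : Type*} (G : SimpleGraph V) (S : Set V) : Set V :=
  {v | v ∉ S ∧ ∀ w, G.Adj v w → w ∈ S}

section IsoSet

variable {V : Type*} {G : SimpleGraph V} {S T : Set V}

lemma isoCount_eq_ncard_isoSet : isoCount G S = (isoSet G S).ncard := rfl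

lemma isIndepSet_isoSet : G.IsIndepSet (isoSet G S) :=
  fun _ hv _ hw _ hadj => hw.1 (hv.2 _ hadj)

lemma insert_neighborSet_subset_union_isoSet {v : V} (hv : v ∈ isoSet G S) :
    insert v (G.neighborSet v) ⊆ S ∪ isoSet G S := by
  rintro w (rfl | hw)
  · exact Or.inr hv
  · exact Or.inl (hv.2 w hw)

lemma isoSet_compl_of_isIndepSet (hT : G.IsIndepSet T) : isoSet G Tᶜ = T := by
  ext v
  refine ⟨fun hv => not_not.mp hv.1, fun hv => ⟨not_not.mpr hv, fun w hadj hw => ?_⟩⟩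
  exact hT hv hw (G.ne_of_adj hadj) hadj

end IsoSet

namespace Gl

variable {k l : ℕ}

lemma adj_inl (a : Fin (l - 1)) (y : Fin (l - 1) ⊕ Fin l × Fin k) :
    (Gl k l).Adj (Sum.inl a) y ↔ Sum.inl a ≠ y := by
  simp [Gl]

lemma adj_inr_inl (i : Fin l) (p : Fin k) (a : Fin (l - 1)) :
    (Gl k l).Adj (Sum.inr (i, p)) (Sum.inl a) := by
  simp [Gl]

lemma adj_inr_inr (i j : Fin l) (p q : Fin k) :
    (Gl k l).Adj (Sum.inr (i, p)) (Sum.inr (j, q)) ↔ i = j ∧ p ≠ q := by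
  simp only [Gl, ne_eq, Sum.inr.injEq, Prod.mk.injEq, Sum.isLeft_inr, Bool.false_eq_true,
    false_or]
  constructor
  · rintro ⟨hne, i', p', q', ⟨rfl, rfl⟩, rfl, rfl⟩
    exact ⟨rfl, fun h => hne ⟨rfl, h⟩⟩
  · rintro ⟨rfl, hpq⟩
    exact ⟨fun h => hpq h.2, i, p, q, ⟨rfl, rfl⟩, rfl, rfl⟩

lemma neighborFinset_inl (a : Fin (l - 1)) :
    (Gl k l).neighborFinset (Sum.inl a) = Finset.univ.erase (Sum.inl a) := by
  ext w
  simp [adj_inl, eq_comm]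

lemma neighborFinset_inr (i : Fin l) (p : Fin k) :
    (Gl k l).neighborFinset (Sum.inr (i, p)) =
      Finset.univ.disjSum ({i} ×ˢ Finset.univ.erase p) := by
  ext (a | ⟨j, q⟩)
  · simp [adj_inr_inl]
  · simp only [mem_neighborFinset, adj_inr_inr, Finset.inr_mem_disjSum, Finset.mem_product,
      Finset.mem_singleton, Finset.mem_erase, Finset.mem_univ, and_true, ne_eq, eq_comm]

lemma degree_inl (a : Fin (l - 1)) :
    (Gl k l).degree (Sum.inl a) = (l - 1) + l * k - 1 := by
  simp [SimpleGraph.degree, neighborFinset_inl]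

lemma degree_inr (i : Fin l) (p : Fin k) :
    (Gl k l).degree (Sum.inr (i, p)) = (l - 1) + (k - 1) := by
  simp [SimpleGraph.degree, neighborFinset_inr]

lemma minDegree_eq (hk : 1 ≤ k) (hl : 1 ≤ l) : (Gl k l).minDegree = (l - 1) + (k - 1) := by
  have : Nonempty (Fin (l - 1) ⊕ Fin l × Fin k) := ⟨Sum.inr (⟨0, hl⟩, ⟨0, hk⟩)⟩
  refine le_antisymm ((degree_inr ⟨0, hl⟩ ⟨0, hk⟩).symm ▸ minDegree_le_degree _ _) ?_
  refine le_minDegree_of_forall_le_degree _ _ fun v => ?_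
  rcases v with a | ⟨i, p⟩
  · have : k ≤ l * k := Nat.le_mul_of_pos_left k (by omega)
    rw [degree_inl]
    omega
  · rw [degree_inr]

variable {S T : Set (Fin (l - 1) ⊕ Fin l × Fin k)}

lemma subset_singleton_of_isIndepSet_of_inl_mem (hT : (Gl k l).IsIndepSet T)
    {a : Fin (l - 1)} (ha : Sum.inl a ∈ T) : T ⊆ {Sum.inl a} := fun v hv => by
  by_contra hne
  exact hT ha hv (Ne.symm hne) ((adj_inl a v).mpr (Ne.symm hne))

lemma subset_range_inr_of_isIndepSet (hT : (Gl k l).IsIndepSet T) (h2 : 2 ≤ T.ncard) :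
    T ⊆ Set.range Sum.inr := by
  rintro (a | x) hv
  · have := Set.ncard_le_ncard (subset_singleton_of_isIndepSet_of_inl_mem hT hv)
    rw [Set.ncard_singleton] at this
    omega
  · exact ⟨x, rfl⟩

lemma eq_of_isIndepSet {i : Fin l} {p q : Fin k} (hT : (Gl k l).IsIndepSet T)
    (hp : Sum.inr (i, p) ∈ T) (hq : Sum.inr (i, q) ∈ T) : p = q := by
  by_contra hne
  exact hT hp hq (by simp [hne]) ((adj_inr_inr i i p q).mpr ⟨rfl, hne⟩)

def cliques (T : Set (Fin (l - 1) ⊕ Fin l × Fin k)) : Set (Fin l) :=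
  Prod.fst '' (Sum.inr ⁻¹' T)

lemma ncard_cliques (hT : (Gl k l).IsIndepSet T) (h2 : 2 ≤ T.ncard) :
    (cliques T).ncard = T.ncard := by
  have hinj : Set.InjOn Prod.fst (Sum.inr ⁻¹' T) := by
    rintro ⟨i, p⟩ hp ⟨j, q⟩ hq (rfl : i = j)
    rw [eq_of_isIndepSet hT hp hq]
  rw [cliques, hinj.ncard_image, ← Set.ncard_image_of_injective _ Sum.inr_injective,
    Set.image_preimage_eq_of_subset (subset_range_inr_of_isIndepSet hT h2)]

lemma isoCount_le (h2 : 2 ≤ isoCount (Gl k l) S) :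
    isoCount (Gl k l) S ≤ l := by
  rw [isoCount_eq_ncard_isoSet] at h2 ⊢
  rw [← ncard_cliques isIndepSet_isoSet h2]
  simpa using Set.ncard_le_card (cliques (isoSet (Gl k l) S))

lemma le_ncard_add_isoCount (h2 : 2 ≤ isoCount (Gl k l) S) :
    (l - 1) + isoCount (Gl k l) S * k ≤ S.ncard + isoCount (Gl k l) S := by
  rw [isoCount_eq_ncard_isoSet] at h2 ⊢
  set I := isoSet (Gl k l) S
  obtain ⟨v, hv⟩ := Set.nonempty_of_ncard_ne_zero (s := I) (by omega)
  obtain ⟨x, rfl⟩ := subset_range_inr_of_isIndepSet isIndepSet_isoSet h2 hv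
  have hcover : Set.range Sum.inl ∪ Sum.inr '' (cliques I ×ˢ Set.univ) ⊆ S ∪ I := by
    rintro _ (⟨a, rfl⟩ | ⟨⟨i, q⟩, ⟨⟨⟨_, p⟩, hp, rfl⟩, -⟩, rfl⟩)
    · exact insert_neighborSet_subset_union_isoSet hv (Or.inr (adj_inr_inl _ _ a))
    · refine insert_neighborSet_subset_union_isoSet hp ?_
      by_cases hpq : p = q
      · exact Or.inl (by rw [hpq])
      · exact Or.inr ((adj_inr_inr _ _ p q).mpr ⟨rfl, hpq⟩)
  calc (l - 1) + I.ncard * k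
      = (Set.range Sum.inl ∪ Sum.inr '' (cliques I ×ˢ Set.univ)).ncard := by
        rw [Set.ncard_union_eq (by simp [Set.disjoint_left]),
          Set.ncard_range_of_injective Sum.inl_injective,
          Set.ncard_image_of_injective _ Sum.inr_injective, Set.ncard_prod,
          ncard_cliques isIndepSet_isoSet h2]
        simp [I]
    _ ≤ (S ∪ I).ncard := Set.ncard_le_ncard hcover
    _ ≤ S.ncard + I.ncard := Set.ncard_union_le S I

lemma isIndepSet_range_inr (p : Fin k) :
    (Gl k l).IsIndepSet (Set.range fun i => Sum.inr (i, p)) := by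
  rintro _ ⟨i, rfl⟩ _ ⟨j, rfl⟩ - hadj
  exact ((adj_inr_inr i j p p).mp hadj).2 rfl

lemma isoCount_compl_range_inr (p : Fin k) :
    isoCount (Gl k l) (Set.range fun i => Sum.inr (i, p))ᶜ = l := by
  rw [isoCount_eq_ncard_isoSet, isoSet_compl_of_isIndepSet (isIndepSet_range_inr p),
    Set.ncard_range_of_injective (fun i j h => by simpa using h), Nat.card_eq_fintype_card,
    Fintype.card_fin]

lemma ncard_compl_range_inr_add (p : Fin k) :
    (Set.range fun i => (Sum.inr (i, p) : Fin (l - 1) ⊕ Fin l × Fin k))ᶜ.ncard + l =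
      (l - 1) + l * k := by
  have := Set.ncard_add_ncard_compl
    (Set.range fun i => (Sum.inr (i, p) : Fin (l - 1) ⊕ Fin l × Fin k))
  rw [Set.ncard_range_of_injective (fun i j h => by simpa using h)] at this
  simp only [Nat.card_eq_fintype_card, Fintype.card_sum, Fintype.card_prod,
    Fintype.card_fin] at this
  omega

end Gl

lemma le_div_sub_one {k t m n : ℝ} (htk : 0 ≤ t + k) (hm : 1 < m) (hmt : m ≤ t + 2)
    (hn : t + 1 + m * k ≤ n + m) : k + (k - 1) / (t + 1) ≤ n / (m - 1) := by
  have ht : 0 < t + 1 := by linarith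
  rw [add_div' _ _ _ ht.ne', div_le_div_iff₀ ht (by linarith)]
  nlinarith [mul_nonneg (sub_nonneg.mpr hmt) htk]

theorem counterexample_params (k t : ℕ) (hk : 2 ≤ k) :
    (Gl k (t + 2)).minDegree = k + t ∧
    isoToughVar (Gl k (t + 2)) = (k : ℝ) + ((k : ℝ) - 1) / ((t : ℝ) + 1) := by
  refine ⟨by rw [Gl.minDegree_eq (by omega) (by omega)]; omega, ?_⟩
  let p : Fin k := ⟨0, by omega⟩
  set W : Set (Fin (t + 2 - 1) ⊕ Fin (t + 2) × Fin k) := (Set.range fun i => Sum.inr (i, p))ᶜ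
  refine IsLeast.csInf_eq ⟨⟨W, ?_, ?_⟩, ?_⟩
  · rw [Gl.isoCount_compl_range_inr]
    omega
  · have hn : (W.ncard : ℝ) + (t + 2) = (t + 1) + (t + 2) * k := by
      exact_mod_cast Gl.ncard_compl_range_inr_add (l := t + 2) p
    rw [Gl.isoCount_compl_range_inr]
    push_cast
    rw [show (t : ℝ) + 2 - 1 = t + 1 by ring]
    field_simp
    linarith
  · rintro _ ⟨S, h2, rfl⟩
    have hm : (1 : ℝ) < isoCount (Gl k (t + 2)) S := by exact_mod_cast h2
    have hmt : (isoCount (Gl k (t + 2)) S : ℝ) ≤ t + 2 := by exact_mod_cast Gl.isoCount_le h2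
    have hn : (t : ℝ) + 1 + isoCount (Gl k (t + 2)) S * k ≤
        S.ncard + isoCount (Gl k (t + 2)) S := by
      exact_mod_cast Gl.le_ncard_add_isoCount h2
    exact le_div_sub_one (by positivity) hm hmt hn
end
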